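/- arXiv:1212.2785 — 6 statements merged into one kernel-verified Lean document; each statement's English description precedes it below -/
import Mathlib

section
/- For every integer n > 1, the open interval (2n, 3n) contains a prime number. -/
/-!
Kummer's theorem says that a prime `p > √(3n)` divides `C(3n, n)` exactly when adding `n` and `2n`
in base `p` produces a carry. If `(2n, 3n)` contains no prime, the carry analysis shows that every
prime factor `p > 3n/5` of `C(3n, n)` lies in `(2n/3, 3n/4] ∪ (n, 3n/2]`, and all such primes divide
`C(⌊3n/2⌋, n) ≤ 3^(3n/2) / 2^n`. The primes up to `√(3n)` contribute at most `(3n)^√(3n)` and those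
in `(√(3n), 3n/5]` at most `4^(3n/5)`. Against `3^(3n) ≤ (3n + 1) 4^n C(3n, n)` this is impossible
once `n ≥ 30000`; for smaller `n` one of the primes `5, 7, 11, 17, …, 59999` lies in `(2n, 3n)`.
-/

open Finset

namespace Nat

theorem choose_mul_pow_le_succ_pow (a m k : ℕ) : m.choose k * a ^ k ≤ (a + 1) ^ m := by
  rcases le_or_gt k m with hkm | hmk
  · rw [add_pow]
    calc m.choose k * a ^ k = a ^ k * 1 ^ (m - k) * m.choose k := by ring
      _ ≤ ∑ i ∈ range (m + 1), a ^ i * 1 ^ (m - i) * m.choose i :=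
        single_le_sum (f := fun i => a ^ i * 1 ^ (m - i) * m.choose i) (fun _ _ => Nat.zero_le _)
          (mem_range.2 (lt_succ_of_le hkm))
  · simp [choose_eq_zero_of_lt hmk]

theorem two_pow_succ_mul_choose_succ (N k : ℕ) :
    2 ^ (k + 1) * N.choose (k + 1) * (k + 1) = 2 ^ k * N.choose k * (2 * (N - k)) := by
  rw [mul_assoc, choose_succ_right_eq]
  ring

theorem two_pow_mul_choose_le (n k : ℕ) :
    2 ^ k * (3 * n).choose k ≤ 4 ^ n * (3 * n).choose n := by
  set t : ℕ → ℕ := fun j => 2 ^ j * (3 * n).choose j with ht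
  have hmono : MonotoneOn t (Set.Iic (2 * n)) := by
    refine monotoneOn_of_le_add_one Set.ordConnected_Iic fun j _ _ hj => ?_
    refine Nat.le_of_mul_le_mul_right ?_ (succ_pos j)
    rw [ht, two_pow_succ_mul_choose_succ]
    exact Nat.mul_le_mul_left _ (by rw [Set.mem_Iic] at hj; omega)
  have hanti : AntitoneOn t (Set.Ici (2 * n)) := by
    refine antitoneOn_of_add_one_le Set.ordConnected_Ici fun j _ hj _ => ?_
    refine Nat.le_of_mul_le_mul_right ?_ (succ_pos j)
    rw [ht, two_pow_succ_mul_choose_succ]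
    exact Nat.mul_le_mul_left _ (by rw [Set.mem_Ici] at hj; omega)
  have hmax : t k ≤ t (2 * n) := by
    rcases le_total k (2 * n) with h | h
    · exact hmono h (Set.mem_Iic.2 le_rfl) h
    · exact hanti (Set.mem_Ici.2 le_rfl) h h
  calc t k ≤ t (2 * n) := hmax
    _ = 4 ^ n * (3 * n).choose n := by
      simp only [ht, pow_mul, choose_symm_of_eq_add (show 3 * n = 2 * n + n by omega)]
      norm_num

theorem three_pow_le_mul_choose (n : ℕ) :
    3 ^ (3 * n) ≤ (3 * n + 1) * (4 ^ n * (3 * n).choose n) := by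
  calc 3 ^ (3 * n) = (2 + 1) ^ (3 * n) := rfl
    _ = ∑ k ∈ range (3 * n + 1), 2 ^ k * 1 ^ (3 * n - k) * (3 * n).choose k := add_pow 2 1 _
    _ ≤ ∑ _k ∈ range (3 * n + 1), 4 ^ n * (3 * n).choose n :=
        sum_le_sum fun k _ => by simpa using two_pow_mul_choose_le n k
    _ = (3 * n + 1) * (4 ^ n * (3 * n).choose n) := by simp

theorem Prime.dvd_choose_iff_le_mod_add_mod {p N k : ℕ} (hp : p.Prime) (hkN : k ≤ N)
    (hN : N < p ^ 2) : p ∣ N.choose k ↔ p ≤ k % p + (N - k) % p := by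
  rw [hp.dvd_iff_one_le_factorization (choose_ne_zero hkN),
    factorization_choose hp hkN (log_lt_of_lt_pow' two_ne_zero hN)]
  by_cases h : p ≤ k % p + (N - k) % p <;> simp [Finset.filter_singleton, h]

theorem le_mod_add_mod_half_of_le_mod_add_mod_two_mul {n p : ℕ} (h5 : 3 * n < 5 * p)
    (h2 : p ≤ 2 * n) (h : p ≤ n % p + 2 * n % p) : p ≤ n % p + n / 2 % p := by
  have hp : 0 < p := by omega
  have hq1 : n / p < 2 := (Nat.div_lt_iff_lt_mul hp).2 (by omega)
  have hq2 : 2 * n / p < 4 := (Nat.div_lt_iff_lt_mul hp).2 (by omega)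
  have hq3 : n / 2 / p < 1 := (Nat.div_lt_iff_lt_mul hp).2 (by omega)
  have := Nat.div_add_mod n p
  have := Nat.div_add_mod (2 * n) p
  have := Nat.div_add_mod (n / 2) p
  have := Nat.mod_lt n hp
  have := Nat.mod_lt (2 * n) hp
  have := Nat.mod_lt (n / 2) hp
  interval_cases (n / p) <;> interval_cases (2 * n / p) <;> interval_cases (n / 2 / p) <;> omega

theorem Prime.dvd_choose_add_half_of_dvd_choose_three_mul {p n : ℕ} (hp : p.Prime)
    (hsq : 3 * n < p ^ 2) (h5 : 3 * n < 5 * p) (h2 : p ≤ 2 * n) (h : p ∣ (3 * n).choose n) :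
    p ∣ (n + n / 2).choose n := by
  rw [hp.dvd_choose_iff_le_mod_add_mod (by omega) hsq, show 3 * n - n = 2 * n by omega] at h
  rw [hp.dvd_choose_iff_le_mod_add_mod (by omega) (by omega), add_tsub_cancel_left]
  exact le_mod_add_mod_half_of_le_mod_add_mod_two_mul h5 h2 h

theorem prod_pow_factorization_choose_le_pow_sqrt {N k : ℕ} {s : Finset ℕ} (hN : 0 < N)
    (hs : s ⊆ Icc 1 (sqrt N)) : ∏ p ∈ s, p ^ (N.choose k).factorization p ≤ N ^ sqrt N :=
  calc ∏ p ∈ s, p ^ (N.choose k).factorization p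
      ≤ ∏ _p ∈ s, N := prod_le_prod' fun _ _ => pow_factorization_choose_le hN
    _ = N ^ #s := prod_const N
    _ ≤ N ^ sqrt N := by
      refine Nat.pow_le_pow_right hN ((card_le_card hs).trans ?_)
      simp

theorem prod_pow_factorization_choose_le_four_pow {N k x : ℕ} {s : Finset ℕ}
    (hs : ∀ p ∈ s, p.Prime ∧ sqrt N < p ∧ p ≤ x) :
    ∏ p ∈ s, p ^ (N.choose k).factorization p ≤ 4 ^ x := by
  have hfactor : ∀ p ∈ s, p ^ (N.choose k).factorization p ≤ p := fun p hp =>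
    (Nat.pow_le_pow_right (hs p hp).1.pos
      (factorization_choose_le_one (sqrt_lt'.1 (hs p hp).2.1))).trans (pow_one p).le
  have hsub : s ⊆ {p ∈ range (x + 1) | p.Prime} := fun p hp =>
    mem_filter.2 ⟨mem_range.2 (lt_succ_of_le (hs p hp).2.2), (hs p hp).1⟩
  calc ∏ p ∈ s, p ^ (N.choose k).factorization p
      ≤ ∏ p ∈ s, p := prod_le_prod' hfactor
    _ ≤ primorial x := prod_le_prod_of_subset_of_one_le' hsub
        fun p hp _ => (mem_filter.1 hp).2.one_lt.le
    _ ≤ 4 ^ x := primorial_le_four_pow x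

theorem prod_pow_factorization_dvd {a b : ℕ} {s : Finset ℕ}
    (hs : ∀ p ∈ s, p.Prime ∧ a.factorization p ≤ 1 ∧ (p ∣ a → p ∣ b)) :
    ∏ p ∈ s, p ^ a.factorization p ∣ b := by
  rw [← prod_filter_of_ne (p := fun p => a.factorization p ≠ 0) fun p _ h he => by simp [he] at h]
  have hone : ∀ p ∈ s.filter (fun p => a.factorization p ≠ 0), p ^ a.factorization p = p := by
    intro p hp
    obtain ⟨hps, hp0⟩ := mem_filter.1 hp
    rw [show a.factorization p = 1 by have := (hs p hps).2.1; omega, pow_one]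
  rw [prod_congr rfl hone]
  exact prod_primes_dvd b (fun p hp => (hs p (mem_filter.1 hp).1).1.prime)
    fun p hp => (hs p (mem_filter.1 hp).1).2.2 (dvd_of_factorization_pos (mem_filter.1 hp).2)

theorem choose_three_mul_le_of_no_prime {n : ℕ} (hn : 1 < n)
    (hno : ¬∃ p, p.Prime ∧ 2 * n < p ∧ p < 3 * n) :
    (3 * n).choose n ≤ (3 * n) ^ sqrt (3 * n) * 4 ^ (3 * n / 5) * (n + n / 2).choose n := by
  set e := ((3 * n).choose n).factorization
  set P := {p ∈ range (3 * n + 1) | p.Prime}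
  have hprod : ∏ p ∈ P, p ^ e p = (3 * n).choose n := by
    rw [prod_filter_of_ne fun p _ h => ?_]
    · exact prod_pow_factorization_choose _ _ (by omega)
    · contrapose! h
      simp [e, factorization_eq_zero_of_not_prime _ h]
  rw [← hprod, ← prod_filter_mul_prod_filter_not P (· ≤ sqrt (3 * n)),
    ← prod_filter_mul_prod_filter_not (P.filter (¬ · ≤ sqrt (3 * n))) (· ≤ 3 * n / 5),
    ← mul_assoc]
  refine Nat.mul_le_mul (Nat.mul_le_mul ?_ ?_) ?_
  · refine prod_pow_factorization_choose_le_pow_sqrt (by omega) fun p hp => ?_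
    simp only [P, mem_filter] at hp
    exact mem_Icc.2 ⟨hp.1.2.one_lt.le, hp.2⟩
  · refine prod_pow_factorization_choose_le_four_pow fun p hp => ?_
    simp only [P, mem_filter] at hp
    exact ⟨hp.1.1.2, not_le.1 hp.1.2, hp.2⟩
  · refine le_of_dvd (choose_pos (by omega)) (prod_pow_factorization_dvd fun p hp => ?_)
    simp only [P, mem_filter, mem_range, not_le] at hp
    obtain ⟨⟨⟨hp3n, hp⟩, hsqrt⟩, h5⟩ := hp
    have hsq : 3 * n < p ^ 2 := sqrt_lt'.1 hsqrt
    have h2 : p ≤ 2 * n := by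
      by_contra! h2
      obtain hlt | rfl := (le_of_lt_succ hp3n).lt_or_eq
      · exact hno ⟨p, hp, h2, hlt⟩
      · have := prime_mul_iff.1 hp
        omega
    exact ⟨hp, factorization_choose_le_one hsq,
      hp.dvd_choose_add_half_of_dvd_choose_three_mul hsq (by omega) h2⟩

end Nat

namespace ElBachraoui

open Real

theorem twenty_two_mul_log_two_le : 22 * log 2 ≤ 15 * log 3 := by
  have h := log_le_log (by norm_num) (show (2 : ℝ) ^ 22 ≤ 3 ^ 15 by norm_num)
  simpa only [log_pow, Nat.cast_ofNat] using h

-- `sqrt_mul_log_add_two_mul_log_le` at `y = 90000 = 300 ^ 2`, exponentiated.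
theorem ninety_thousand_pow_mul_two_pow_le : 90000 ^ 302 * 2 ^ 66000 ≤ 3 ^ 45000 :=
  calc 90000 ^ 302 * 2 ^ 66000 ≤ (2 ^ 17) ^ 302 * 2 ^ 66000 := by gcongr; norm_num
    _ ≤ (2 ^ 19) ^ 3750 := by
      rw [← pow_mul, ← pow_add, ← pow_mul]
      exact pow_le_pow_right₀ (by norm_num) (by norm_num)
    _ ≤ (3 ^ 12) ^ 3750 := pow_le_pow_left₀ (Nat.zero_le _) (by norm_num) 3750
    _ = 3 ^ 45000 := by rw [← pow_mul]

theorem sqrt_mul_log_add_two_mul_log_le {y : ℝ} (hy : 90000 ≤ y) :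
    30 * (√y * log y + 2 * log y) ≤ (15 * log 3 - 22 * log 2) * y := by
  set c := 15 * log 3 - 22 * log 2
  set g : ℝ → ℝ := fun y => 30 * (√y * log y + 2 * log y) - c * y with hg_def
  have hg : ConcaveOn ℝ (Set.Ioi 1) g := by
    have hlog := strictConcaveOn_log_Ioi.concaveOn.subset (Set.Ioi_subset_Ioi zero_le_one)
      (convex_Ioi 1)
    exact ((strictConcaveOn_sqrt_mul_log_Ioi.concaveOn.add (hlog.smul zero_le_two)).smul
      (by norm_num : (0 : ℝ) ≤ 30)).sub
      ((convexOn_id (convex_Ioi (1 : ℝ))).smul (sub_nonneg.2 twenty_two_mul_log_two_le))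
  have hg9 : 0 ≤ g 9 := by
    have h3 : √9 = 3 := by rw [show (9 : ℝ) = 3 ^ 2 by norm_num, sqrt_sq (by norm_num)]
    have h9 : log 9 = 2 * log 3 := by rw [show (9 : ℝ) = 3 ^ 2 by norm_num, log_pow]; norm_num
    simp only [hg_def, c, h3, h9]
    have := log_nonneg (show (1 : ℝ) ≤ 2 by norm_num)
    have := log_nonneg (show (1 : ℝ) ≤ 3 by norm_num)
    linarith
  have hg90000 : g 90000 ≤ 0 := by
    have h : √90000 = 300 := by rw [show (90000 : ℝ) = 300 ^ 2 by norm_num, sqrt_sq (by norm_num)]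
    have hcert := log_le_log (by positivity)
      (Nat.cast_le (α := ℝ).2 ninety_thousand_pow_mul_two_pow_le)
    rw [Nat.cast_mul, Nat.cast_pow, Nat.cast_pow, Nat.cast_pow] at hcert
    rw [log_mul (by positivity) (by positivity), log_pow, log_pow, log_pow] at hcert
    simp only [hg_def, c, h]
    push_cast at hcert
    linarith
  have := hg.right_le_of_le_left'' (x := 9) (y := 90000) (z := y) (by norm_num)
    (by simp only [Set.mem_Ioi]; linarith) (by norm_num) hy (hg90000.trans hg9)
  simp only [hg_def] at this
  linarith

theorem main_inequality {n : ℕ} (hn : 30000 ≤ n) :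
    (3 * n + 1) * 4 ^ n * (3 * n) ^ Nat.sqrt (3 * n) * 4 ^ (3 * n / 5) * 3 ^ (n + n / 2) <
      3 ^ (3 * n) * 2 ^ n := by
  have hx : (90000 : ℝ) ≤ 3 * n := by exact_mod_cast (by omega : 90000 ≤ 3 * n)
  have hsqrt : (Nat.sqrt (3 * n) : ℝ) * log (3 * n) ≤ √(3 * n) * log (3 * n) := by
    refine mul_le_mul_of_nonneg_right ?_ (log_nonneg (by linarith))
    exact_mod_cast Real.nat_sqrt_le_real_sqrt
  have hlog_succ : log (3 * n + 1) < 2 * log (3 * n) :=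
    calc log (3 * n + 1) < log ((3 * n) ^ 2) := log_lt_log (by linarith) (by nlinarith)
      _ = 2 * log (3 * n) := by rw [log_pow]; norm_num
  have hfifth : ((3 * n / 5 : ℕ) : ℝ) * log 2 ≤ 3 * n / 5 * log 2 := by
    refine mul_le_mul_of_nonneg_right ?_ (log_nonneg (by norm_num))
    exact_mod_cast Nat.cast_div_le
  have hhalf : ((n / 2 : ℕ) : ℝ) * log 3 ≤ n / 2 * log 3 :=
    mul_le_mul_of_nonneg_right Nat.cast_div_le (log_nonneg (by norm_num))
  have hlog4 : log 4 = 2 * log 2 := by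
    rw [show (4 : ℝ) = 2 ^ 2 by norm_num, log_pow]; norm_num
  have key := sqrt_mul_log_add_two_mul_log_le hx
  rw [← Nat.cast_lt (α := ℝ), ← log_lt_log_iff (by positivity) (by positivity)]
  push_cast
  simp (disch := positivity) only [log_mul, log_pow, hlog4] at hsqrt hlog_succ key ⊢
  push_cast
  linarith

theorem exists_prime_of_le_of_prime {b : ℕ} (p : ℕ) (hp : p.Prime) (hb : 2 * b < p)
    (H : ∀ n, 1 < n → n ≤ p / 3 → ∃ q, q.Prime ∧ 2 * n < q ∧ q < 3 * n) :
    ∀ n, 1 < n → n ≤ b → ∃ q, q.Prime ∧ 2 * n < q ∧ q < 3 * n := by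
  intro n hn hnb
  by_cases h : p < 3 * n
  · exact ⟨p, hp, by omega, h⟩
  · exact H n hn (by omega)

theorem exists_prime_of_le_29999 :
    ∀ n, 1 < n → n ≤ 29999 → ∃ p, p.Prime ∧ 2 * n < p ∧ p < 3 * n := by
  refine exists_prime_of_le_of_prime 59999 (by norm_num) (by norm_num) ?_
  refine exists_prime_of_le_of_prime 40009 (by norm_num) (by norm_num) ?_
  refine exists_prime_of_le_of_prime 26681 (by norm_num) (by norm_num) ?_
  refine exists_prime_of_le_of_prime 17789 (by norm_num) (by norm_num) ?_
  refine exists_prime_of_le_of_prime 11863 (by norm_num) (by norm_num) ?_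
  refine exists_prime_of_le_of_prime 7919 (by norm_num) (by norm_num) ?_
  refine exists_prime_of_le_of_prime 5279 (by norm_num) (by norm_num) ?_
  refine exists_prime_of_le_of_prime 3527 (by norm_num) (by norm_num) ?_
  refine exists_prime_of_le_of_prime 2351 (by norm_num) (by norm_num) ?_
  refine exists_prime_of_le_of_prime 1567 (by norm_num) (by norm_num) ?_
  refine exists_prime_of_le_of_prime 1049 (by norm_num) (by norm_num) ?_
  refine exists_prime_of_le_of_prime 701 (by norm_num) (by norm_num) ?_
  refine exists_prime_of_le_of_prime 467 (by norm_num) (by norm_num) ?_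
  refine exists_prime_of_le_of_prime 311 (by norm_num) (by norm_num) ?_
  refine exists_prime_of_le_of_prime 211 (by norm_num) (by norm_num) ?_
  refine exists_prime_of_le_of_prime 149 (by norm_num) (by norm_num) ?_
  refine exists_prime_of_le_of_prime 101 (by norm_num) (by norm_num) ?_
  refine exists_prime_of_le_of_prime 67 (by norm_num) (by norm_num) ?_
  refine exists_prime_of_le_of_prime 47 (by norm_num) (by norm_num) ?_
  refine exists_prime_of_le_of_prime 31 (by norm_num) (by norm_num) ?_
  refine exists_prime_of_le_of_prime 23 (by norm_num) (by norm_num) ?_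
  refine exists_prime_of_le_of_prime 17 (by norm_num) (by norm_num) ?_
  refine exists_prime_of_le_of_prime 11 (by norm_num) (by norm_num) ?_
  refine exists_prime_of_le_of_prime 7 (by norm_num) (by norm_num) ?_
  refine exists_prime_of_le_of_prime 5 (by norm_num) (by norm_num) ?_
  omega

theorem exists_prime_of_30000_le {n : ℕ} (hn : 30000 ≤ n) :
    ∃ p, p.Prime ∧ 2 * n < p ∧ p < 3 * n := by
  by_contra hno
  refine (main_inequality hn).not_ge ?_
  calc 3 ^ (3 * n) * 2 ^ n ≤ (3 * n + 1) * (4 ^ n * (3 * n).choose n) * 2 ^ n :=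
        Nat.mul_le_mul_right _ (Nat.three_pow_le_mul_choose n)
    _ ≤ (3 * n + 1) * (4 ^ n * ((3 * n) ^ Nat.sqrt (3 * n) * 4 ^ (3 * n / 5) *
          (n + n / 2).choose n)) * 2 ^ n := by
        gcongr
        exact Nat.choose_three_mul_le_of_no_prime (by omega) hno
    _ = (3 * n + 1) * 4 ^ n * (3 * n) ^ Nat.sqrt (3 * n) * 4 ^ (3 * n / 5) *
          ((n + n / 2).choose n * 2 ^ n) := by ring
    _ ≤ (3 * n + 1) * 4 ^ n * (3 * n) ^ Nat.sqrt (3 * n) * 4 ^ (3 * n / 5) * 3 ^ (n + n / 2) :=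
        Nat.mul_le_mul_left _ (Nat.choose_mul_pow_le_succ_pow 2 _ _)

end ElBachraoui

theorem interval_2n_3n_contains_prime :
    ∀ n : ℕ, 1 < n → ∃ p : ℕ, p.Prime ∧ 2 * n < p ∧ p < 3 * n := by
  intro n hn
  obtain hsmall | hlarge := lt_or_ge n 30000
  · exact ElBachraoui.exists_prime_of_le_29999 n hn (by omega)
  · exact ElBachraoui.exists_prime_of_30000_le hlarge
end

section
/- Every v-Ramanujan number R_v(m) is prime, for every real v > 1 and every m ≥ 1. -/
/-!
If `N` satisfies the defining property of `R_v(m)` and is composite, then `N - 1` satisfies it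
too: on `[N - 1, N)` the count `π(x)` already equals `π(N)` because `N` itself adds no prime,
while `π(x / v) ≤ π(N / v)`. Minimality therefore forces `N` to be prime, and `N = 1` is
excluded since `π(1) - π(1 / v) = 0 < m`.
-/

/-- Prime counting function extended to real arguments: number of primes `≤ x`. -/
noncomputable def primePi (x : ℝ) : ℕ := Nat.primeCounting ⌊x⌋₊

lemma primePi_mono : Monotone primePi :=
  Nat.monotone_primeCounting.comp Nat.floor_mono

lemma primePi_natCast (n : ℕ) : primePi n = n.primeCounting := by
  rw [primePi, Nat.floor_natCast]

lemma primePi_one : primePi 1 = 0 := by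
  simpa using primePi_natCast 1

lemma Nat.primeCounting_sub_one_of_not_prime {n : ℕ} (hn : ¬ n.Prime) :
    (n - 1).primeCounting = n.primeCounting := by
  rw [Nat.primeCounting_sub_one, Nat.primeCounting, Nat.primeCounting', Nat.count_succ,
    if_neg hn, add_zero]

lemma primePi_eq_of_not_prime {n : ℕ} (hn : ¬ n.Prime) {x : ℝ} (hx : (n : ℝ) - 1 ≤ x)
    (hxn : x ≤ n) : primePi x = primePi n := by
  refine le_antisymm (primePi_mono hxn) ?_
  calc primePi n = (n - 1).primeCounting := by
        rw [primePi_natCast, Nat.primeCounting_sub_one_of_not_prime hn]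
    _ ≤ primePi x := by
        refine Nat.monotone_primeCounting ?_
        rcases n.eq_zero_or_pos with rfl | hn0
        · exact Nat.zero_le _
        · exact Nat.le_floor (by rwa [Nat.cast_pred hn0])

lemma primePi_sub_primePi_div_le_of_not_prime {v : ℝ} (hv : 0 < v) {n : ℕ} (hn : ¬ n.Prime)
    {x : ℝ} (hx : (n : ℝ) - 1 ≤ x) (hxn : x ≤ n) :
    primePi n - primePi (n / v) ≤ primePi x - primePi (x / v) := by
  rw [primePi_eq_of_not_prime hn hx hxn]
  exact Nat.sub_le_sub_left (primePi_mono (div_le_div_of_nonneg_right hxn hv.le)) _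

theorem v_Ramanujan_number_is_prime (v : ℝ) (hv : 1 < v) (m : ℕ) (hm : 1 ≤ m) (N : ℕ)
    (hN : IsLeast {N : ℕ | 0 < N ∧ ∀ x : ℝ, (N : ℝ) ≤ x → m ≤ primePi x - primePi (x / v)} N) :
    N.Prime := by
  obtain ⟨⟨hN0, hNx⟩, hmin⟩ := hN
  have hN1 : N ≠ 1 := by
    rintro rfl
    have := hNx 1 (by norm_num)
    rw [primePi_one] at this
    omega
  by_contra hNp
  have hpred : 0 < N - 1 ∧ ∀ x : ℝ, ((N - 1 : ℕ) : ℝ) ≤ x → m ≤ primePi x - primePi (x / v) := by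
    refine ⟨by omega, fun x hx => ?_⟩
    rw [Nat.cast_pred hN0] at hx
    rcases le_total (N : ℝ) x with hNle | hxle
    · exact hNx x hNle
    · exact (hNx N le_rfl).trans
        (primePi_sub_primePi_div_le_of_not_prime (by linarith) hNp hx hxle)
  have := hmin hpred
  omega
end

section
/- Every v-Chebyshev number C_v(m) is prime, for every real v > 1 and every m ≥ 1. -/
/-!
If `N = C_v(m)` were composite, then `ϑ` would be constant on `[N - 1, N]`, while `ln x` and
`ϑ(x / v)` only grow there; so the bound at `x = N` would already give it on `[N - 1, N]`, and
`N - 1` would be a smaller admissible value. The case `N = 1` is excluded because `ϑ` vanishes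
on `[1, 2)` while `m ln x > 0` there.
-/

/-- Chebyshev theta function: `ϑ(x) = ∑_{p ≤ x, p prime} ln p`. -/
noncomputable def chebTheta (x : ℝ) : ℝ :=
  ∑ p ∈ (Finset.range (⌊x⌋₊ + 1)).filter Nat.Prime, Real.log p

open Real

lemma chebTheta_nonneg (x : ℝ) : 0 ≤ chebTheta x :=
  Finset.sum_nonneg fun p hp =>
    log_nonneg (by exact_mod_cast (Finset.mem_filter.mp hp).2.one_lt.le)

lemma chebTheta_mono : Monotone chebTheta := by
  intro x y hxy
  apply Finset.sum_le_sum_of_subset_of_nonneg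
  · exact Finset.filter_subset_filter _ <| Finset.range_subset_range.mpr <|
      Nat.succ_le_succ (Nat.floor_le_floor hxy)
  · intro p hp _
    exact log_nonneg (by exact_mod_cast (Finset.mem_filter.mp hp).2.one_lt.le)

lemma chebTheta_natCast_floor (x : ℝ) : chebTheta ⌊x⌋₊ = chebTheta x := by
  simp only [chebTheta, Nat.floor_natCast]

lemma chebTheta_eq_zero_of_lt_two {x : ℝ} (hx : x < 2) : chebTheta x = 0 := by
  refine Finset.sum_eq_zero fun p hp => ?_
  obtain ⟨hp_lt, hp_prime⟩ := Finset.mem_filter.mp hp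
  have : ⌊x⌋₊ < 2 := (Nat.floor_lt' two_ne_zero).mpr (by exact_mod_cast hx)
  have := hp_prime.two_le
  grind

lemma chebTheta_succ_of_not_prime {n : ℕ} (hn : ¬ (n + 1).Prime) :
    chebTheta (n + 1 : ℕ) = chebTheta n := by
  simp only [chebTheta, Nat.floor_natCast, Finset.range_add_one (n := n + 1),
    Finset.filter_insert, hn, if_false]

lemma chebTheta_eq_of_mem_Ico {n : ℕ} (hn : ¬ (n + 1).Prime) {x : ℝ}
    (hx : x ∈ Set.Ico (n : ℝ) (n + 1)) : chebTheta x = chebTheta (n + 1 : ℕ) := by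
  rw [← chebTheta_natCast_floor, Nat.floor_eq_on_Ico n x hx, chebTheta_succ_of_not_prime hn]

/-- `C_v(m)` is the least positive integer `N` with `ChebyshevBound v m N`. -/
def ChebyshevBound (v c N : ℝ) : Prop :=
  ∀ x : ℝ, N ≤ x → c * log x ≤ chebTheta x - chebTheta (x / v)

lemma chebTheta_sub_lt_mul_log_of_lt_two {v c x : ℝ} (hc : 0 < c) (hx₁ : 1 < x)
    (hx₂ : x < 2) :
    chebTheta x - chebTheta (x / v) < c * log x := by
  rw [chebTheta_eq_zero_of_lt_two hx₂]
  have := chebTheta_nonneg (x / v)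
  have := mul_pos hc (log_pos hx₁)
  linarith

lemma ChebyshevBound.of_succ_of_not_prime {v c : ℝ} (hv : 0 ≤ v) (hc : 0 ≤ c) {n : ℕ}
    (hn₀ : 0 < n) (hn : ¬ (n + 1).Prime) (h : ChebyshevBound v c (n + 1 : ℕ)) :
    ChebyshevBound v c n := by
  intro x hx
  rcases le_or_gt ((n + 1 : ℕ) : ℝ) x with hx' | hx'
  · exact h x hx'
  have hx_pos : 0 < x := lt_of_lt_of_le (by exact_mod_cast hn₀) hx
  have hθ : chebTheta x = chebTheta (n + 1 : ℕ) :=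
    chebTheta_eq_of_mem_Ico hn ⟨hx, by exact_mod_cast hx'⟩
  calc c * log x ≤ c * log (n + 1 : ℕ) := by gcongr
    _ ≤ chebTheta (n + 1 : ℕ) - chebTheta ((n + 1 : ℕ) / v) := h _ le_rfl
    _ ≤ chebTheta x - chebTheta (x / v) := by
        rw [hθ]
        gcongr
        exact chebTheta_mono (div_le_div_of_nonneg_right hx'.le hv)

theorem v_Chebyshev_number_is_prime (v : ℝ) (hv : 1 < v) (m : ℕ) (hm : 1 ≤ m) (N : ℕ)
    (hN : IsLeast {N : ℕ | 0 < N ∧ ∀ x : ℝ, (N : ℝ) ≤ x →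
      (m : ℝ) * Real.log x ≤ chebTheta x - chebTheta (x / v)} N) :
    N.Prime := by
  obtain ⟨⟨hN₀, hbound⟩, hleast⟩ := hN
  have hm₀ : (0 : ℝ) < m := by exact_mod_cast hm
  have two_le : 2 ≤ N := by
    by_contra! hN₂
    obtain rfl : N = 1 := by omega
    have := chebTheta_sub_lt_mul_log_of_lt_two (v := v) (x := 3 / 2) hm₀ (by norm_num)
      (by norm_num)
    exact this.not_ge (hbound (3 / 2) (by norm_num))
  obtain ⟨n, rfl⟩ : ∃ n, N = n + 1 := ⟨N - 1, by omega⟩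
  by_contra hN
  have := hleast ⟨by omega, ChebyshevBound.of_succ_of_not_prime (by linarith) hm₀.le
    (by omega) hN hbound⟩
  omega
end

section
/- For every m ≥ 2, N₁(m) = (R(m) + 1)/2, where N₁(m) is the smallest integer such that for all n ≥ N₁(m) the open interval (n, 2n) contains at least m primes, and R(m) is the m-th Ramanujan prime. -/
/-!
With `P j : m ≤ π j - π (j / 2)`, the Ramanujan prime `R` is the point from which `P` holds for
all `j`, and `N₁` the point from which it holds for all even `j = 2n`, because for `n ≥ 2` the
interval `(n, 2n)` contains `π (2n) - π n` primes. Since `2n` is not prime, an odd `j = 2n - 1`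
inherits `P` from `2n`; hence `P` holds from `2N₁ - 1` on, so `R ≤ 2N₁ - 1`, while `N₁ ≤ ⌈R / 2⌉`
is immediate.
-/

open Finset
open scoped Nat.Prime

theorem two_mul_eq_add_one_of_isLeast {P : ℕ → Prop} {R N : ℕ} (h₀ : ¬ P 0)
    (hpred : ∀ n, P (2 * n) → P (2 * n - 1))
    (hR : IsLeast {M : ℕ | 0 < M ∧ ∀ j, M ≤ j → P j} R)
    (hN : IsLeast {M : ℕ | ∀ n, M ≤ n → P (2 * n)} N) :
    2 * N = R + 1 := by
  have hN_pos : 0 < N := Nat.pos_of_ne_zero fun h ↦ h₀ (hN.1 0 h.le)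
  have hN_le : N ≤ (R + 1) / 2 := hN.2 fun n hn ↦ hR.1.2 _ (by omega)
  have hR_le : R ≤ 2 * N - 1 := by
    refine hR.2 ⟨by omega, fun j hj ↦ ?_⟩
    obtain ⟨n, rfl | rfl⟩ := Nat.even_or_odd' j
    · exact hN.1 n (by omega)
    · have h := hpred (n + 1) (hN.1 (n + 1) (by omega))
      rwa [show 2 * (n + 1) - 1 = 2 * n + 1 by omega] at h
  omega

theorem forall_natCast_le_imp_floor_iff {P : ℕ → Prop} (M : ℕ) :
    (∀ x : ℝ, (M : ℝ) ≤ x → P ⌊x⌋₊) ↔ ∀ j : ℕ, M ≤ j → P j :=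
  ⟨fun h j hj ↦ by simpa using h j (by exact_mod_cast hj),
    fun h _ hx ↦ h _ (Nat.le_floor hx)⟩

theorem primePi_sub_primePi_div_two (x : ℝ) :
    primePi x - primePi (x / 2) = π ⌊x⌋₊ - π (⌊x⌋₊ / 2) := by
  rw [primePi, primePi, Nat.floor_div_ofNat]

namespace Nat

theorem primeCounting_sub_one_of_not_prime_s12 {n : ℕ} (hn : ¬ n.Prime) : π (n - 1) = π n := by
  rw [primeCounting_sub_one, primeCounting_eq_primeCounting'_succ, primeCounting', count_succ,
    if_neg hn, add_zero]

theorem not_prime_two_mul {n : ℕ} (hn : 2 ≤ n) : ¬ (2 * n).Prime := fun hp ↦ by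
  rcases prime_mul_iff.1 hp with ⟨-, h⟩ | ⟨-, h⟩ <;> omega

theorem card_filter_prime_Ioc {a b : ℕ} (hab : a ≤ b) :
    #{p ∈ Ioc a b | p.Prime} = π b - π a := by
  rw [← primesLE_card_eq_primeCounting, ← primesLE_card_eq_primeCounting,
    primesLE_eq_filter_Ioc_zero, primesLE_eq_filter_Ioc_zero,
    ← Ioc_union_Ioc_eq_Ioc (zero_le a) hab, filter_union,
    card_union_of_disjoint (disjoint_filter_filter (Ioc_disjoint_Ioc_of_le le_rfl)),
    Nat.add_sub_cancel_left]

theorem card_filter_prime_Ioo_two_mul {n : ℕ} (hn : 2 ≤ n) :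
    #{p ∈ Ioo n (2 * n) | p.Prime} = π (2 * n) - π n := by
  rw [← card_filter_prime_Ioc (by omega), ← Ioo_insert_right (by omega), filter_insert,
    if_neg (not_prime_two_mul hn)]

theorem primeCounting_two_mul_sub_le_one {n : ℕ} (hn : n < 2) : π (2 * n) - π n ≤ 1 := by
  interval_cases n <;> decide

end Nat

theorem le_card_filter_prime_Ioo_iff {m : ℕ} (hm : 2 ≤ m) (n : ℕ) :
    m ≤ #{p ∈ Ioo n (2 * n) | p.Prime} ↔ m ≤ π (2 * n) - π (2 * n / 2) := by
  rw [Nat.mul_div_cancel_left n two_pos]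
  obtain hn | hn := lt_or_ge n 2
  · have h : #{p ∈ Ioo n (2 * n) | p.Prime} = 0 := by interval_cases n <;> decide
    have := Nat.primeCounting_two_mul_sub_le_one hn
    omega
  rw [Nat.card_filter_prime_Ioo_two_mul hn]

theorem le_primeCounting_sub_half_of_two_mul {m n : ℕ} (hm : 2 ≤ m)
    (h : m ≤ π (2 * n) - π (2 * n / 2)) :
    m ≤ π (2 * n - 1) - π ((2 * n - 1) / 2) := by
  rw [Nat.mul_div_cancel_left n two_pos] at h
  obtain hn | hn := lt_or_ge n 2
  · have := Nat.primeCounting_two_mul_sub_le_one hn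
    omega
  rw [show (2 * n - 1) / 2 = n - 1 by omega,
    Nat.primeCounting_sub_one_of_not_prime_s12 (Nat.not_prime_two_mul hn)]
  have := Nat.monotone_primeCounting (Nat.sub_le n 1)
  omega

theorem N1_eq_Ramanujan_succ_div_two (m : ℕ) (hm : 2 ≤ m) (R N : ℕ)
    (hR : IsLeast {M : ℕ | 0 < M ∧ ∀ x : ℝ, (M : ℝ) ≤ x →
      m ≤ primePi x - primePi (x / 2)} R)
    (hN : IsLeast {M : ℕ | ∀ n : ℕ, M ≤ n →
      m ≤ ((Finset.Ioo n (2 * n)).filter Nat.Prime).card} N) :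
    2 * N = R + 1 := by
  simp only [primePi_sub_primePi_div_two,
    forall_natCast_le_imp_floor_iff (P := fun j ↦ m ≤ π j - π (j / 2))] at hR
  simp only [le_card_filter_prime_Ioo_iff hm] at hN
  exact two_mul_eq_add_one_of_isLeast (by simp only [Nat.zero_div, Nat.sub_self]; omega)
    (fun _ ↦ le_primeCounting_sub_half_of_two_mul hm) hR hN
end

section
/- For k ≥ 1 and m ≥ 2, if R_{(k+1)/k}(m) ≡ 1 (mod k+1), then N_k(m) = (R_{(k+1)/k}(m) + k)/(k+1). -/
open Finset
open scoped Nat.Prime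

namespace Nat

lemma primeCounting_add_card_filter_prime_Ioc {a b : ℕ} (h : a ≤ b) :
    π a + #{p ∈ Ioc a b | p.Prime} = π b := by
  rw [← primesLE_card_eq_primeCounting, ← primesLE_card_eq_primeCounting,
    primesLE_eq_filter_Ioc_zero, primesLE_eq_filter_Ioc_zero,
    ← Ioc_union_Ioc_eq_Ioc (Nat.zero_le a) h, filter_union,
    card_union_of_disjoint (disjoint_filter_filter (Ioc_disjoint_Ioc_of_le le_rfl))]

lemma filter_prime_Ioo_eq_filter_prime_Ioc {a b : ℕ} (hb : ¬ b.Prime) :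
    {p ∈ Ioo a b | p.Prime} = {p ∈ Ioc a b | p.Prime} := by
  ext p
  simp only [mem_filter, mem_Ioo, mem_Ioc]
  grind

end Nat

lemma primePi_of_lt_two {x : ℝ} (hx : x < 2) : primePi x = 0 := by
  rw [primePi, Nat.primeCounting_eq_zero_iff, ← Nat.lt_succ_iff]
  exact Nat.floor_lt' two_ne_zero |>.mpr (by norm_num; linarith)

lemma floor_mul_div_add_one_eq {k n : ℕ} {x : ℝ} (hlo : ((k + 1) * n : ℕ) ≤ x)
    (hhi : x < ((k + 1) * n : ℕ) + 1) : ⌊k * x / (k + 1)⌋₊ = k * n := by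
  push_cast at hlo hhi
  have hk : (0 : ℝ) ≤ k := k.cast_nonneg
  have hx : 0 ≤ x := le_trans (by positivity) hlo
  rw [Nat.floor_eq_iff (by positivity), le_div_iff₀ (by positivity), div_lt_iff₀ (by positivity)]
  push_cast
  constructor <;> nlinarith

lemma primePi_sub_primePi_mul_div_eq {k n : ℕ} {x : ℝ} (hlo : ((k + 1) * n : ℕ) ≤ x)
    (hhi : x < ((k + 1) * n : ℕ) + 1) :
    primePi x - primePi (k * x / (k + 1)) = #{p ∈ Ioc (k * n) ((k + 1) * n) | p.Prime} := by
  have hx : ⌊x⌋₊ = (k + 1) * n :=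
    (Nat.floor_eq_iff (le_trans (Nat.cast_nonneg _) hlo)).2 ⟨hlo, hhi⟩
  rw [primePi, primePi, hx, floor_mul_div_add_one_eq hlo hhi,
    ← Nat.primeCounting_add_card_filter_prime_Ioc (Nat.mul_le_mul_right n k.le_succ),
    Nat.add_sub_cancel_left]

theorem Nk_eq_of_R_mod_one (k m : ℕ) (hk : 1 ≤ k) (hm : 2 ≤ m) (R N : ℕ)
    (hR : IsLeast {M : ℕ | 0 < M ∧ ∀ x : ℝ, (M : ℝ) ≤ x →
      m ≤ primePi x - primePi (k * x / (k + 1))} R)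
    (hN : IsLeast {M : ℕ | ∀ n : ℕ, M ≤ n →
      m ≤ ((Finset.Ioo (k * n) ((k + 1) * n)).filter Nat.Prime).card} N)
    (hmod : R % (k + 1) = 1) :
    (k + 1) * N = R + k := by
  obtain ⟨q, rfl⟩ : ∃ q, R = (k + 1) * q + 1 := ⟨R / (k + 1), by
    conv_lhs => rw [← Nat.div_add_mod R (k + 1), hmod]⟩
  have hq : 1 ≤ q := by
    by_contra! hq
    have h := hR.1.2 1 (by simp [Nat.lt_one_iff.1 hq])
    rw [primePi_of_lt_two one_lt_two] at h
    omega
  have hupper : N ≤ q + 1 := hN.2 fun n hn => by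
    have hRn : (k + 1) * q + 1 ≤ (k + 1) * n := by nlinarith
    have h := hR.1.2 ((k + 1) * n : ℕ) (by exact_mod_cast hRn)
    rw [primePi_sub_primePi_mul_div_eq le_rfl (lt_add_one _)] at h
    rwa [Nat.filter_prime_Ioo_eq_filter_prime_Ioc (Nat.not_prime_mul (by omega) (by omega))]
  have hlower : q + 1 ≤ N := by
    by_contra! hNq
    suffices (k + 1) * q + 1 ≤ (k + 1) * q by omega
    refine hR.2 ⟨by positivity, fun x hx => ?_⟩
    rcases le_or_gt (((k + 1) * q + 1 : ℕ) : ℝ) x with hRx | hxR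
    · exact hR.1.2 x hRx
    rw [primePi_sub_primePi_mul_div_eq hx (by exact_mod_cast hxR)]
    exact (hN.1 q (by omega)).trans (card_le_card (filter_subset_filter _ Ioo_subset_Ioc_self))
  obtain rfl : N = q + 1 := le_antisymm hupper hlower
  ring
end

section
/- Suppose that for every real x ≥ x₀ the interval (x, (1 + 1/Δ)x] contains a prime, and let k ≥ 1 and m ≥ 1 be integers with (1 + 1/Δ)^m < 1 + 1/k. Then for every integer n ≥ x₀/k, the open interval (kn, (k+1)n) contains at least m primes. -/
/-!
Chain the hypothesis greedily: a prime `p₁ ∈ (x, q x]`, then a prime `p₂ ∈ (p₁, q p₁]`, and so on,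
with `q = 1 + 1/Δ`. The `m` primes obtained from `x = k n` are distinct and at most
`q^m k n < (1 + 1/k) k n = (k + 1) n`.
-/

open Finset

theorem exists_finset_card_eq_of_forall_exists_mem_Ioc_mul {P : ℕ → Prop} {x₀ q : ℝ}
    (h : ∀ x : ℝ, x₀ ≤ x → ∃ p : ℕ, P p ∧ x < p ∧ (p : ℝ) ≤ q * x) (m : ℕ) :
    ∀ x : ℝ, x₀ ≤ x → 0 ≤ x →
      ∃ s : Finset ℕ, s.card = m ∧ ∀ p ∈ s, P p ∧ x < p ∧ (p : ℝ) ≤ q ^ m * x := by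
  induction m with
  | zero => exact fun x _ _ ↦ ⟨∅, rfl, by simp⟩
  | succ m ih =>
    intro x hx₀ hx
    obtain ⟨p, hPp, hxp, hpq⟩ := h x hx₀
    have hq : 1 ≤ q := by nlinarith
    obtain ⟨s, hcard, hs⟩ := ih p (hx₀.trans hxp.le) (hx.trans hxp.le)
    have hps : p ∉ s := fun hp ↦ (hs p hp).2.1.false
    refine ⟨insert p s, by rw [card_insert_of_notMem hps, hcard], ?_⟩
    simp only [mem_insert, forall_eq_or_imp]
    refine ⟨⟨hPp, hxp, ?_⟩, fun r hr ↦ ?_⟩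
    · calc (p : ℝ) ≤ q * x := hpq
        _ ≤ q ^ (m + 1) * x := by gcongr; exact le_self_pow₀ hq (by omega)
    · obtain ⟨hPr, hpr, hrq⟩ := hs r hr
      refine ⟨hPr, hxp.trans hpr, ?_⟩
      calc (r : ℝ) ≤ q ^ m * p := hrq
        _ ≤ q ^ m * (q * x) := by gcongr
        _ = q ^ (m + 1) * x := by ring

theorem small_intervals_method_general (Δ x₀ : ℝ) (k m : ℕ) (hk : 1 ≤ k)
    (hprime : ∀ x : ℝ, x₀ ≤ x → ∃ p : ℕ, p.Prime ∧ x < (p : ℝ) ∧ (p : ℝ) ≤ (1 + 1 / Δ) * x)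
    (hpow : (1 + 1 / Δ) ^ m < 1 + 1 / (k : ℝ)) :
    ∀ n : ℕ, x₀ / k ≤ (n : ℝ) →
      m ≤ ((Finset.Ioo (k * n) ((k + 1) * n)).filter Nat.Prime).card := by
  intro n hn
  have hk₀ : (0 : ℝ) < k := by exact_mod_cast hk
  have hkn : x₀ ≤ k * n := by rwa [div_le_iff₀' hk₀] at hn
  obtain ⟨s, rfl, hs⟩ :=
    exists_finset_card_eq_of_forall_exists_mem_Ioc_mul hprime m _ hkn (by positivity)
  refine card_le_card fun p hp ↦ ?_
  obtain ⟨hpp, hlo, hhi⟩ := hs p hp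
  have hkn₀ : (0 : ℝ) < k * n :=
    (by positivity : (0 : ℝ) ≤ k * n).lt_of_ne fun h ↦ by
      rw [← h, mul_zero] at hhi
      linarith
  have hup : (p : ℝ) < (k + 1) * n :=
    calc (p : ℝ) ≤ (1 + 1 / Δ) ^ s.card * (k * n) := hhi
      _ < (1 + 1 / k) * (k * n) := by gcongr
      _ = (k + 1) * n := by field_simp
  simp only [mem_filter, mem_Ioo]
  exact ⟨⟨by exact_mod_cast hlo, by exact_mod_cast hup⟩, hpp⟩

theorem small_intervals_method (Δ x₀ : ℝ) (k m : ℕ) (hk : 1 ≤ k) (hm : 1 ≤ m)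
    (hprime : ∀ x : ℝ, x₀ ≤ x → ∃ p : ℕ, p.Prime ∧ x < (p : ℝ) ∧ (p : ℝ) ≤ (1 + 1 / Δ) * x)
    (hpow : (1 + 1 / Δ) ^ m < 1 + 1 / (k : ℝ)) :
    ∀ n : ℕ, x₀ / k ≤ (n : ℝ) →
      m ≤ ((Finset.Ioo (k * n) ((k + 1) * n)).filter Nat.Prime).card :=
  small_intervals_method_general Δ x₀ k m hk hprime hpow
end
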